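/- For all (a₁,a₂) ∈ ℝ², |S_ρ(a₁,a₂)|² = K(X₁(a₁,a₂), X₂(a₁,a₂)), where |·| denotes the complex absolute value. -/

import Mathlib

/-!
With `u = e^{2πia₁}` and `v = e^{2πia₂}` on the unit circle, conjugation is inversion, so
`|S_ρ|² = S(u, v) S(u⁻¹, v⁻¹)` for the Laurent polynomial `S` with `S_ρ = S(u, v)`, and
`X₁ + iX₂ = u + v⁻¹ + u⁻¹v`. Since `K(y₁, y₂) = -(w w̄ + 9)² + 4(w³ + w̄³) + 108` for
`w = y₁ + iy₂`, the theorem reduces to an identity of Laurent polynomials in `u, v`.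
-/

open Real

noncomputable section

/-- `X₁` for `A₂`. -/
def X1 (a₁ a₂ : ℝ) : ℝ :=
  Real.cos (2 * π * a₁) + Real.cos (2 * π * a₂) + Real.cos (2 * π * (a₁ - a₂))

/-- `X₂` for `A₂`. -/
def X2 (a₁ a₂ : ℝ) : ℝ :=
  Real.sin (2 * π * a₁) - Real.sin (2 * π * a₂) - Real.sin (2 * π * (a₁ - a₂))

/-- The weight polynomial `K` of `A₂`. -/
def K (y₁ y₂ : ℝ) : ℝ :=
  -(y₁ ^ 2 + y₂ ^ 2 + 9) ^ 2 + 8 * (y₁ ^ 3 - 3 * y₁ * y₂ ^ 2) + 108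

/-- The lowest antisymmetric orbit function `S_ρ` of `A₂`. -/
def Srho (a₁ a₂ : ℝ) : ℂ :=
  Complex.exp (2 * π * Complex.I * (a₁ + a₂)) -
  Complex.exp (2 * π * Complex.I * (-a₁ + 2 * a₂)) -
  Complex.exp (2 * π * Complex.I * (2 * a₁ - a₂)) +
  Complex.exp (2 * π * Complex.I * (a₁ - 2 * a₂)) +
  Complex.exp (2 * π * Complex.I * (-2 * a₁ + a₂)) -
  Complex.exp (2 * π * Complex.I * (-a₁ - a₂))

open ComplexConjugate

section Laurent

variable {F : Type*} [Field F]

def SrhoLaurent (u v : F) : F :=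
  u * v - u⁻¹ * v ^ 2 - u ^ 2 * v⁻¹ + u * v⁻¹ ^ 2 + u⁻¹ ^ 2 * v - u⁻¹ * v⁻¹

def XLaurent (u v : F) : F := u + v⁻¹ + u⁻¹ * v

theorem map_SrhoLaurent {G : Type*} [Field G] (f : F →+* G) (u v : F) :
    f (SrhoLaurent u v) = SrhoLaurent (f u) (f v) := by
  simp [SrhoLaurent]

theorem map_XLaurent {G : Type*} [Field G] (f : F →+* G) (u v : F) :
    f (XLaurent u v) = XLaurent (f u) (f v) := by
  simp [XLaurent]

theorem SrhoLaurent_mul_SrhoLaurent_inv {u v : F} (hu : u ≠ 0) (hv : v ≠ 0) :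
    SrhoLaurent u v * SrhoLaurent u⁻¹ v⁻¹ =
      -(XLaurent u v * XLaurent u⁻¹ v⁻¹ + 9) ^ 2 +
        4 * (XLaurent u v ^ 3 + XLaurent u⁻¹ v⁻¹ ^ 3) + 108 := by
  simp only [SrhoLaurent, XLaurent, inv_inv]
  field_simp
  ring

end Laurent

def expTwoPiI (t : ℝ) : ℂ := Complex.exp (2 * π * Complex.I * t)

theorem expTwoPiI_ne_zero (t : ℝ) : expTwoPiI t ≠ 0 := Complex.exp_ne_zero _

theorem conj_expTwoPiI (t : ℝ) : conj (expTwoPiI t) = (expTwoPiI t)⁻¹ := by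
  simp [expTwoPiI, ← Complex.exp_conj, ← Complex.exp_neg, map_ofNat]

theorem expTwoPiI_eq_cos_add_sin_mul_I (t : ℝ) :
    expTwoPiI t = Real.cos (2 * π * t) + Real.sin (2 * π * t) * Complex.I := by
  have h : 2 * π * Complex.I * t = ((2 * π * t : ℝ) : ℂ) * Complex.I := by push_cast; ring
  rw [expTwoPiI, h, Complex.exp_mul_I, ← Complex.ofReal_cos, ← Complex.ofReal_sin]

theorem expTwoPiI_add (s t : ℝ) : expTwoPiI (s + t) = expTwoPiI s * expTwoPiI t := by
  simp only [expTwoPiI, ← Complex.exp_add]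
  push_cast
  ring_nf

theorem expTwoPiI_neg (t : ℝ) : expTwoPiI (-t) = (expTwoPiI t)⁻¹ := by
  simp only [expTwoPiI, ← Complex.exp_neg]
  push_cast
  ring_nf

theorem Srho_eq_SrhoLaurent (a₁ a₂ : ℝ) :
    Srho a₁ a₂ = SrhoLaurent (expTwoPiI a₁) (expTwoPiI a₂) := by
  simp only [Srho, SrhoLaurent, expTwoPiI, ← Complex.exp_neg, ← Complex.exp_nat_mul,
    ← Complex.exp_add]
  push_cast
  ring_nf

theorem X1_add_X2_mul_I (a₁ a₂ : ℝ) :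
    (X1 a₁ a₂ : ℂ) + X2 a₁ a₂ * Complex.I = XLaurent (expTwoPiI a₁) (expTwoPiI a₂) := by
  rw [XLaurent, ← expTwoPiI_neg, ← expTwoPiI_neg, ← expTwoPiI_add, neg_add_eq_sub, ← neg_sub]
  simp only [X1, X2, expTwoPiI_eq_cos_add_sin_mul_I, mul_neg, Real.cos_neg, Real.sin_neg]
  push_cast
  ring

theorem ofReal_K (y₁ y₂ : ℝ) :
    (K y₁ y₂ : ℂ) = -((y₁ + y₂ * Complex.I) * conj (y₁ + y₂ * Complex.I) + 9) ^ 2 +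
      4 * ((y₁ + y₂ * Complex.I) ^ 3 + conj (y₁ + y₂ * Complex.I) ^ 3) + 108 := by
  simp only [K, map_add, map_mul, Complex.conj_ofReal, Complex.conj_I]
  push_cast
  ring_nf
  simp only [Complex.I_sq, Complex.I_pow_four]
  ring

/-- For `A₂`, `|S_ρ|² = K(X₁, X₂)` pointwise. -/
theorem abs_Srho_sq_eq_K_A2 (a₁ a₂ : ℝ) :
    ‖Srho a₁ a₂‖ ^ 2 = K (X1 a₁ a₂) (X2 a₁ a₂) := by
  apply Complex.ofReal_injective
  rw [ofReal_K, X1_add_X2_mul_I, map_XLaurent, conj_expTwoPiI, conj_expTwoPiI,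
    Complex.ofReal_pow, ← Complex.mul_conj', Srho_eq_SrhoLaurent, map_SrhoLaurent,
    conj_expTwoPiI, conj_expTwoPiI]
  exact SrhoLaurent_mul_SrhoLaurent_inv (expTwoPiI_ne_zero a₁) (expTwoPiI_ne_zero a₂)
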